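/- For every nonempty finite trace π = π₀,…,π_n over 2^P and all propositional formulas C, G over P: π satisfies the LTLf formula ◇(C ∧ ○◇(G ∧ last)) under standard LTLf finite-trace semantics at position 0 (i.e., there is a position j < n with C at j and G at n) if and only if π ⊨ ⟨true*;C;true*;G⟩end under LDLf semantics. -/
import Mathlib


/-- Propositional formulas over atomic propositions `P`. -/
inductive PropForm (P : Type) : Type
  | tru : PropForm P
  | atom : P → PropForm P
  | not : PropForm P → PropForm P
  | and : PropForm P → PropForm P → PropForm P

/-- Satisfaction of a propositional formula by an interpretation (subset of `P`). -/
def PropForm.Sat {P : Type} (I : Set P) : PropForm P → Prop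
  | .tru => True
  | .atom p => p ∈ I
  | .not ϕ => ¬ PropForm.Sat I ϕ
  | .and ϕ ψ => PropForm.Sat I ϕ ∧ PropForm.Sat I ψ

mutual
/-- LDLf formulas over atomic propositions `P`. -/
inductive LDLf (P : Type) : Type
  | tt : LDLf P
  | neg : LDLf P → LDLf P
  | conj : LDLf P → LDLf P → LDLf P
  | dia : PathExp P → LDLf P → LDLf P

/-- Path expressions of LDLf. -/
inductive PathExp (P : Type) : Type
  | prop : PropForm P → PathExp P
  | test : LDLf P → PathExp P
  | plus : PathExp P → PathExp P → PathExp P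
  | comp : PathExp P → PathExp P → PathExp P
  | star : PathExp P → PathExp P
end

mutual
/-- `LDLf.SatAt π φ i` : the LDLf formula `φ` is true at position `i` of the finite trace `π`. -/
def LDLf.SatAt {P : Type} (π : List (Set P)) : LDLf P → ℕ → Prop
  | .tt => fun _ => True
  | .neg φ => fun i => ¬ LDLf.SatAt π φ i
  | .conj φ₁ φ₂ => fun i => LDLf.SatAt π φ₁ i ∧ LDLf.SatAt π φ₂ i
  | .dia ρ φ => fun i => ∃ j, i ≤ j ∧ j ≤ π.length ∧ PathExp.Sem π ρ i j ∧ LDLf.SatAt π φ j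

/-- `PathExp.Sem π ρ i j` : the relation `π(i,j) ∈ L(ρ)`. -/
def PathExp.Sem {P : Type} (π : List (Set P)) : PathExp P → ℕ → ℕ → Prop
  | .prop ϕ => fun i j => j = i + 1 ∧ j ≤ π.length ∧ PropForm.Sat (π.getD i ∅) ϕ
  | .test ψ => fun i j => j = i ∧ LDLf.SatAt π ψ i
  | .plus ρ₁ ρ₂ => fun i j => PathExp.Sem π ρ₁ i j ∨ PathExp.Sem π ρ₂ i j
  | .comp ρ₁ ρ₂ => fun i j => ∃ k, PathExp.Sem π ρ₁ i k ∧ PathExp.Sem π ρ₂ k j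
  | .star ρ => Relation.ReflTransGen (PathExp.Sem π ρ)
end

/-- `[ρ]φ ≐ ¬⟨ρ⟩¬φ`. -/
def LDLf.box {P : Type} (ρ : PathExp P) (φ : LDLf P) : LDLf P := .neg (.dia ρ (.neg φ))

/-- `ff ≐ ¬tt`. -/
def LDLf.ff {P : Type} : LDLf P := .neg .tt

/-- A propositional formula `ϕ` used as an LDLf formula stands for `⟨ϕ⟩tt`. -/
def LDLf.ofProp {P : Type} (ϕ : PropForm P) : LDLf P := .dia (.prop ϕ) .tt

/-- `end ≐ [true?]ff`. -/
def LDLf.endf {P : Type} : LDLf P := LDLf.box (.test (LDLf.ofProp .tru)) LDLf.ff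

/-- `last ≐ [true]end`. -/
def LDLf.lastf {P : Type} : LDLf P := LDLf.box (.prop .tru) LDLf.endf

/-- `π ⊨ φ` means `π,0 ⊨ φ`. -/
def LDLf.Sat {P : Type} (π : List (Set P)) (φ : LDLf P) : Prop := LDLf.SatAt π φ 0

/-- LTLf formulas over atomic propositions `P`. -/
inductive LTLf (P : Type) : Type
  | prop : PropForm P → LTLf P
  | neg : LTLf P → LTLf P
  | conj : LTLf P → LTLf P → LTLf P
  | next : LTLf P → LTLf P
  | untl : LTLf P → LTLf P → LTLf P

/-- Standard LTLf finite-trace semantics: `LTLf.SatAt π φ i` means `φ` holds at position `i`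
of the nonempty finite trace `π`. -/
def LTLf.SatAt {P : Type} (π : List (Set P)) : LTLf P → ℕ → Prop
  | .prop ϕ => fun i => PropForm.Sat (π.getD i ∅) ϕ
  | .neg φ => fun i => ¬ LTLf.SatAt π φ i
  | .conj φ₁ φ₂ => fun i => LTLf.SatAt π φ₁ i ∧ LTLf.SatAt π φ₂ i
  | .next φ => fun i => i + 1 < π.length ∧ LTLf.SatAt π φ (i + 1)
  | .untl φ₁ φ₂ => fun i => ∃ j, i ≤ j ∧ j < π.length ∧ LTLf.SatAt π φ₂ j ∧
      ∀ k, i ≤ k → k < j → LTLf.SatAt π φ₁ k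

/-- `◇φ ≐ true U φ`. -/
def LTLf.ev {P : Type} (φ : LTLf P) : LTLf P := .untl (.prop .tru) φ

/-- `□φ ≐ ¬◇¬φ`. -/
def LTLf.always {P : Type} (φ : LTLf P) : LTLf P := .neg (LTLf.ev (.neg φ))

/-- `last ≐ ¬○true`: holds at `i` iff `i` is the final position of the trace. -/
def LTLf.lastf {P : Type} : LTLf P := .neg (.next (.prop .tru))

/-- `π ⊨ φ` means `φ` holds at position `0` of `π`. -/
def LTLf.Sat {P : Type} (π : List (Set P)) (φ : LTLf P) : Prop := LTLf.SatAt π φ 0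


lemma sem_star_tru {P : Type} (π : List (Set P)) (i j : ℕ) :
    PathExp.Sem π (.star (.prop .tru)) i j ↔ (i = j ∨ (i < j ∧ j ≤ π.length)) := by
  constructor
  · intro h
    rw [PathExp.Sem] at h
    induction h with
    | refl => exact Or.inl rfl
    | tail _ hstep ih =>
      rw [PathExp.Sem] at hstep
      obtain ⟨rfl, hle, _⟩ := hstep
      rcases ih with rfl | ⟨h1, h2⟩
      · exact Or.inr ⟨Nat.lt_succ_self _, hle⟩
      · exact Or.inr ⟨Nat.lt_succ_of_lt h1, hle⟩
  · rintro (rfl | ⟨h1, h2⟩)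
    · exact Relation.ReflTransGen.refl
    · rw [PathExp.Sem]
      have key : ∀ m, i ≤ m → m ≤ π.length →
          Relation.ReflTransGen (PathExp.Sem π (.prop .tru)) i m := by
        intro m hm
        induction m, hm using Nat.le_induction with
        | base => intro _; exact Relation.ReflTransGen.refl
        | succ m hm ih =>
          intro hmn
          refine (ih (by omega)).tail ?_
          rw [PathExp.Sem]
          exact ⟨rfl, hmn, trivial⟩
      exact key j (le_of_lt h1) h2

lemma satAt_endf {P : Type} (π : List (Set P)) (j : ℕ) :
    LDLf.SatAt π LDLf.endf j ↔ π.length ≤ j := by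
  simp only [LDLf.endf, LDLf.box, LDLf.ff, LDLf.ofProp, LDLf.SatAt, PathExp.Sem,
    PropForm.Sat, not_not, not_exists, not_and]
  constructor
  · intro h
    by_contra hc
    exact h j le_rfl (by omega)
      ⟨rfl, j + 1, by omega, by omega, ⟨rfl, by omega, trivial⟩, trivial⟩ trivial
  · rintro h k hk1 hk2 ⟨rfl, m, hm1, hm2, ⟨rfl, hm3, -⟩, -⟩ -
    omega

lemma rtg_succ {n i j : ℕ} :
    Relation.ReflTransGen (fun a b => b = a + 1 ∧ b ≤ n ∧ True) i j ↔
      (i = j ∨ (i < j ∧ j ≤ n)) := by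
  constructor
  · intro h
    induction h with
    | refl => exact Or.inl rfl
    | tail _ hstep ih =>
      obtain ⟨rfl, hle, -⟩ := hstep
      omega
  · rintro (rfl | ⟨h1, h2⟩)
    · exact Relation.ReflTransGen.refl
    · have key : ∀ m, i ≤ m → m ≤ n →
          Relation.ReflTransGen (fun a b => b = a + 1 ∧ b ≤ n ∧ True) i m := by
        intro m hm
        induction m, hm using Nat.le_induction with
        | base => intro _; exact Relation.ReflTransGen.refl
        | succ m hm ih => exact fun hmn => (ih (by omega)).tail ⟨rfl, hmn, trivial⟩
      exact key j (le_of_lt h1) h2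

/-- On nonempty finite traces, the LTLf formula `◇(C ∧ ○◇(G ∧ last))` is equivalent to the
LDLf formula `⟨true*;C;true*;G⟩end`. -/
theorem ltlf_C_then_G_iff_ldlf {P : Type} (π : List (Set P)) (hπ : π ≠ [])
    (C G : PropForm P) :
    LTLf.Sat π (LTLf.ev (.conj (.prop C)
        (.next (LTLf.ev (.conj (.prop G) LTLf.lastf))))) ↔
      LDLf.Sat π (.dia (.comp (.star (.prop .tru))
        (.comp (.prop C) (.comp (.star (.prop .tru)) (.prop G)))) LDLf.endf) := by
  have hn : 0 < π.length := List.length_pos_iff.mpr hπ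
  simp only [LTLf.Sat, LTLf.ev, LTLf.lastf, LTLf.SatAt, PropForm.Sat, LDLf.Sat, LDLf.SatAt,
    PathExp.Sem, not_and, not_lt]
  constructor
  · rintro ⟨j, -, hj2, ⟨hC, hj3, m, hm1, hm2, ⟨hG, hlast⟩, -⟩, -⟩
    have hm : m + 1 = π.length := by
      by_contra hc
      exact (hlast (by omega)) trivial
    refine ⟨π.length, Nat.zero_le _, le_rfl,
      ⟨j, rtg_succ.mpr (by omega), j + 1, ⟨rfl, by omega, hC⟩,
        m, rtg_succ.mpr (by omega), hm.symm, le_rfl, hG⟩, ?_⟩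
    rintro ⟨k, hk1, hk2, ⟨rfl, m2, -, -, ⟨rfl, hm3, -⟩, -⟩, -⟩
    omega
  · rintro ⟨j, -, hj2, ⟨a, ha, b, ⟨rfl, hb, hC⟩, c, hc, rfl, hcn, hG⟩, hend⟩
    rw [rtg_succ] at ha hc
    have hc1 : c + 1 = π.length := by
      by_contra hne
      exact hend ⟨c + 1, le_rfl, by omega,
        ⟨rfl, c + 2, by omega, by omega, ⟨rfl, by omega, trivial⟩, trivial⟩, not_not_intro trivial⟩
    refine ⟨a, Nat.zero_le _, by omega, ⟨hC, by omega, c, by omega, by omega,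
      ⟨hG, by intro hh _; omega⟩, fun _ _ _ => trivial⟩, fun _ _ _ => trivial⟩
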